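/- Let T = S(d_1,…,d_k) be a spider and let f be an independent broadcast on T of maximum weight (an α_b-broadcast). Then every vertex v with f(v) > 0 is a leaf of T. -/

import Mathlib

/-!
Suppose a broadcasting vertex `v` of a maximum independent broadcast `f` is not a leaf. Let `i`
be its branch (a longest branch if `v` is the branch vertex), `z` the deepest broadcasting
non-leaf on branch `i`, `ℓ` the leaf of branch `i` and `ℓ'` the leaf of a longest other branch
`m`, so that `d(ℓ, ℓ') = d_i + d_m`. Every other broadcasting vertex reaches `ℓ` only through `z`,
so the power of `z` can be moved to `ℓ` without breaking independence. If
`f(z) + f(ℓ) < d_i + d_m`, broadcasting `f(z) + f(ℓ) + 1` from `ℓ` instead is heavier. Otherwise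
`z` and `ℓ` are the only broadcasting vertices, and broadcasting `d_i + d_m - 1` from both `ℓ` and
`ℓ'` is heavier, since `f(z) ≤ ecc(z) < d_i + d_m` and `f(ℓ) < d(z, ℓ) ≤ d_i`.
-/

variable {V : Type*}

/-- The eccentricity of a vertex: the maximum distance to any vertex. -/
noncomputable def ecc (G : SimpleGraph V) [Fintype V] (v : V) : ℕ :=
  Finset.univ.sup (fun u => G.dist u v)

/-- A broadcast on `G`: a function assigning each vertex a power at most its eccentricity. -/
def IsBroadcast (G : SimpleGraph V) [Fintype V] (f : V → ℕ) : Prop :=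
  ∀ v, f v ≤ ecc G v

/-- `u` hears the broadcasting vertex `v`. -/
def Hears (G : SimpleGraph V) (f : V → ℕ) (u v : V) : Prop :=
  0 < f v ∧ G.dist u v ≤ f v

/-- An independent broadcast: no broadcasting vertex hears another vertex. -/
def IsIndepBroadcast (G : SimpleGraph V) [Fintype V] (f : V → ℕ) : Prop :=
  IsBroadcast G f ∧ ∀ v w, 0 < f v → v ≠ w → ¬ Hears G f v w

/-- The broadcast independence number: the maximum weight of an independent broadcast. -/
noncomputable def alphaB (G : SimpleGraph V) [Fintype V] : ℕ :=
  sSup {w | ∃ f, IsIndepBroadcast G f ∧ w = ∑ v, f v}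

/-- Vertices of the spider `S(d 0, …, d (k-1))`: `none` is the branch vertex `u`, and
`some ⟨i, j⟩` is the vertex at distance `j + 1` from `u` on the `i`-th branch. -/
abbrev SpiderVert (k : ℕ) (d : Fin k → ℕ) : Type := Option (Σ i : Fin k, Fin (d i))

/-- The spider `S(d 0, …, d (k-1))`: the tree obtained from the star `K_{1,k}` with
center `u` by subdividing edges so that the `i`-th leaf is at distance `d i` from `u`. -/
def spider (k : ℕ) (d : Fin k → ℕ) : SimpleGraph (SpiderVert k d) where
  Adj x y :=
    match x, y with
    | none, none => False
    | none, some ⟨_, j⟩ => (j : ℕ) = 0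
    | some ⟨_, j⟩, none => (j : ℕ) = 0
    | some ⟨i, j⟩, some ⟨i', j'⟩ =>
        (i : ℕ) = (i' : ℕ) ∧ ((j : ℕ) + 1 = (j' : ℕ) ∨ (j' : ℕ) + 1 = (j : ℕ))
  symm := ⟨by
    rintro (_ | ⟨i, j⟩) (_ | ⟨i', j'⟩) hxy <;> simp_all <;> omega⟩
  loopless := ⟨by
    rintro (_ | ⟨i, j⟩) hxy <;> simp_all⟩

/-- The `i`-th leaf of the spider, at distance `d i` from the branch vertex. -/
def spiderLeaf (k : ℕ) (d : Fin k → ℕ) (hd : ∀ i, 1 ≤ d i) (i : Fin k) : SpiderVert k d :=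
  some ⟨i, ⟨d i - 1, by have := hd i; omega⟩⟩

/-- A leaf of the spider: the end vertex of a branch. -/
def IsSpiderLeaf (k : ℕ) (d : Fin k → ℕ) : SpiderVert k d → Prop
  | none => False
  | some ⟨i, j⟩ => (j : ℕ) + 1 = d i


namespace SimpleGraph

variable {G : SimpleGraph V}

theorem le_add_length_of_adj_le (φ : V → ℕ) (hφ : ∀ a b, G.Adj a b → φ a ≤ φ b + 1) {x y : V}
    (p : G.Walk x y) : φ x ≤ φ y + p.length := by
  induction p with
  | nil => simp
  | cons hab _ ih =>
    rw [Walk.length_cons]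
    have := hφ _ _ hab
    omega

theorem exists_walk_length_le_of_exists_adj_lt (φ : V → ℕ) {y : V}
    (hφ : ∀ a, a ≠ y → ∃ b, G.Adj a b ∧ φ b < φ a) (x : V) :
    ∃ p : G.Walk x y, p.length ≤ φ x := by
  induction hn : φ x using Nat.strong_induction_on generalizing x with
  | _ n ih =>
    by_cases hxy : x = y
    · subst hxy
      exact ⟨.nil, Nat.zero_le _⟩
    · obtain ⟨b, hxb, hb⟩ := hφ x hxy
      obtain ⟨p, hp⟩ := ih _ (hn ▸ hb) b rfl
      exact ⟨.cons hxb p, by rw [Walk.length_cons]; omega⟩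

theorem dist_eq_of_adj_le_of_exists_adj_lt (φ : V → ℕ) {y : V} (hy : φ y = 0)
    (hle : ∀ a b, G.Adj a b → φ a ≤ φ b + 1) (hlt : ∀ a, a ≠ y → ∃ b, G.Adj a b ∧ φ b < φ a)
    (x : V) : G.dist x y = φ x := by
  obtain ⟨p, hp⟩ := exists_walk_length_le_of_exists_adj_lt φ hlt x
  obtain ⟨q, hq⟩ := p.reachable.exists_walk_length_eq_dist
  have := le_add_length_of_adj_le φ hle q
  have := dist_le p
  omega

end SimpleGraph

section Broadcast

variable {G : SimpleGraph V} [Fintype V] {f : V → ℕ}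

theorem dist_le_ecc (u v : V) : G.dist u v ≤ ecc G v :=
  Finset.le_sup (f := fun u => G.dist u v) (Finset.mem_univ u)

theorem IsIndepBroadcast.sum_le_alphaB (hf : IsIndepBroadcast G f) : ∑ v, f v ≤ alphaB G := by
  refine le_csSup ⟨∑ v, ecc G v, ?_⟩ ⟨f, hf, rfl⟩
  rintro _ ⟨g, hg, rfl⟩
  exact Finset.sum_le_sum fun v _ => hg.1 v

theorem IsIndepBroadcast.lt_dist (hf : IsIndepBroadcast G f) {x y : V} (hx : 0 < f x)
    (hy : 0 < f y) (hxy : x ≠ y) : f y < G.dist x y :=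
  Nat.lt_of_not_le fun h => hf.2 x y hx hxy ⟨hy, h⟩

theorem IsIndepBroadcast.lt_dist_of_connected (hf : IsIndepBroadcast G f) (hG : G.Connected)
    {x y : V} (hx : 0 < f x) (hxy : x ≠ y) : f y < G.dist x y := by
  rcases Nat.eq_zero_or_pos (f y) with hy | hy
  · exact hy ▸ hG.pos_dist_of_ne hxy
  · exact hf.lt_dist hx hy hxy

theorem Fintype.sum_update_add_apply {ι : Type*} [Fintype ι] [DecidableEq ι] (g : ι → ℕ) (i : ι)
    (b : ℕ) : ∑ x, Function.update g i b x + g i = ∑ x, g x + b := by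
  rw [Finset.sum_update_of_mem (Finset.mem_univ i),
    Finset.sum_eq_add_sum_sdiff_singleton_of_mem (Finset.mem_univ i) g]
  omega

theorem IsIndepBroadcast.exists_transfer (hf : IsIndepBroadcast G f) {z ℓ : V} (hzℓ : z ≠ ℓ)
    (hz : 0 < f z) {N : ℕ} (hNecc : N ≤ ecc G ℓ) (hN : N ≤ f z + G.dist z ℓ)
    (hsep : ∀ x, 0 < f x → x ≠ z → x ≠ ℓ → G.dist x z + G.dist z ℓ ≤ G.dist x ℓ) :
    ∃ g, IsIndepBroadcast G g ∧ ∑ x, g x + f z + f ℓ = ∑ x, f x + N := by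
  classical
  have hsum := Fintype.sum_update_add_apply (Function.update f z 0) ℓ N
  have hsum' := Fintype.sum_update_add_apply f z 0
  rw [Function.update_of_ne hzℓ.symm] at hsum
  set g := Function.update (Function.update f z 0) ℓ N
  have hgℓ : g ℓ = N := Function.update_self ..
  have hg : ∀ x, x ≠ ℓ → 0 < g x → x ≠ z ∧ g x = f x := by
    intro x hxℓ hx
    have hxz : x ≠ z := by rintro rfl; simp [g, hxℓ] at hx
    exact ⟨hxz, by simp [g, hxℓ, hxz]⟩
  refine ⟨g, ⟨fun x => ?_, fun x y hx hxy ⟨hy, hxy'⟩ => ?_⟩, ?_⟩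
  · by_cases hxℓ : x = ℓ
    · exact hxℓ ▸ hgℓ ▸ hNecc
    · by_cases hxz : x = z
      · subst hxz
        simp [g, hxℓ]
      · simpa [g, hxℓ, hxz] using hf.1 x
  · by_cases hyℓ : y = ℓ
    · subst hyℓ
      obtain ⟨hxz, hgx⟩ := hg x hxy hx
      have := hf.lt_dist (hgx ▸ hx) hz hxz
      have := hsep x (hgx ▸ hx) hxz hxy
      omega
    obtain ⟨hyz, hgy⟩ := hg y hyℓ hy
    by_cases hxℓ : x = ℓ
    · subst hxℓ
      have := hf.lt_dist hz (hgy ▸ hy) (Ne.symm hyz)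
      have := hsep y (hgy ▸ hy) hyz hyℓ
      have := G.dist_comm (u := z) (v := y)
      have := G.dist_comm (u := x) (v := y)
      omega
    obtain ⟨hxz, hgx⟩ := hg x hxℓ hx
    exact hf.2 x y (hgx ▸ hx) hxy ⟨hgy ▸ hy, hgy ▸ hxy'⟩
  · omega

theorem exists_isIndepBroadcast_pair {u w : V} (huw : u ≠ w) {n : ℕ} (hn : n < G.dist u w) :
    ∃ g, IsIndepBroadcast G g ∧ ∑ x, g x = 2 * n := by
  classical
  set g : V → ℕ := fun x => if x = u ∨ x = w then n else 0
  have hg : ∀ x, 0 < g x → x = u ∨ x = w := fun x hx => by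
    by_contra h
    simp [g, h] at hx
  refine ⟨g, ⟨fun x => ?_, fun x y hx hxy ⟨hy, hxy'⟩ => ?_⟩, ?_⟩
  · by_cases hx : x = u ∨ x = w
    · rcases hx with rfl | rfl <;> simp only [g, true_or, or_true, if_true]
      · exact hn.le.trans (G.dist_comm.trans_le (dist_le_ecc w x))
      · exact hn.le.trans (dist_le_ecc u x)
    · simp [g, hx]
  · have hgy : g y = n := by simp [g, hg y hy]
    have := G.dist_comm (u := u) (v := w)
    rcases hg x hx with rfl | rfl <;> rcases hg y hy with rfl | rfl
    all_goals first | exact hxy rfl | omega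
  · rw [Fintype.sum_eq_add u w huw fun x hx => by simp [g, hx.1, hx.2]]
    simp only [g, true_or, or_true, if_true]
    omega

end Broadcast

namespace SpiderVert

variable {k : ℕ} {d : Fin k → ℕ}

def depth : SpiderVert k d → ℕ
  | none => 0
  | some ⟨_, j⟩ => (j : ℕ) + 1

/-- The branch vertex lies on every branch. -/
def OnBranch (i : Fin k) : SpiderVert k d → Prop
  | none => True
  | some ⟨i', _⟩ => i' = i

end SpiderVert

open SpiderVert

section SpiderDist

variable {k : ℕ} {d : Fin k → ℕ}

/-- `(j - j') + (j' - j)` is `|j - j'|` in truncated subtraction. -/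
def spiderDist : SpiderVert k d → SpiderVert k d → ℕ
  | none, y => y.depth
  | x, none => x.depth
  | some ⟨i, j⟩, some ⟨i', j'⟩ =>
      if (i : ℕ) = i' then (j : ℕ) - j' + (j' - j) else (j : ℕ) + j' + 2

theorem spiderDist_self (x : SpiderVert k d) : spiderDist x x = 0 := by
  rcases x with _ | ⟨i, j⟩ <;> simp [spiderDist, depth]

theorem spiderDist_le_of_adj {a b : SpiderVert k d} (hab : (spider k d).Adj a b)
    (y : SpiderVert k d) : spiderDist a y ≤ spiderDist b y + 1 := by
  rcases a with _ | ⟨i, j⟩ <;> rcases b with _ | ⟨i', j'⟩ <;> rcases y with _ | ⟨i'', j''⟩ <;>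
    simp only [spider, spiderDist, depth] at hab ⊢ <;> (try split_ifs) <;> omega

theorem spiderDist_exists_adj_lt {a y : SpiderVert k d} (hay : a ≠ y) :
    ∃ b, (spider k d).Adj a b ∧ spiderDist b y < spiderDist a y := by
  rcases a with _ | ⟨i, j⟩
  · rcases y with _ | ⟨i', j'⟩
    · exact absurd rfl hay
    · refine ⟨some ⟨i', ⟨0, j'.pos⟩⟩, rfl, ?_⟩
      simp [spiderDist, depth]
  by_cases hsame : ∃ j' : Fin (d i), y = some ⟨i, j'⟩
  · obtain ⟨j', rfl⟩ := hsame
    rcases lt_trichotomy (j : ℕ) j' with hlt | heq | hgt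
    · refine ⟨some ⟨i, ⟨j + 1, by omega⟩⟩, ⟨rfl, Or.inl rfl⟩, ?_⟩
      simp only [spiderDist, if_true]
      omega
    · exact absurd (by rw [Fin.ext heq]) hay
    · refine ⟨some ⟨i, ⟨j - 1, by omega⟩⟩, ⟨rfl, Or.inr (by dsimp only; omega)⟩, ?_⟩
      simp only [spiderDist, if_true]
      omega
  have hy : ∀ i' (j' : Fin (d i')), y = some ⟨i', j'⟩ → (i : ℕ) ≠ i' := by
    rintro i' j' rfl h
    obtain rfl := Fin.ext h
    exact hsame ⟨j', rfl⟩
  obtain ⟨_ | j, hj⟩ := j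
  · refine ⟨none, rfl, ?_⟩
    rcases y with _ | ⟨i', j'⟩ <;> simp [spiderDist, depth, hy]
  · refine ⟨some ⟨i, ⟨j, by omega⟩⟩, ⟨rfl, Or.inr rfl⟩, ?_⟩
    rcases y with _ | ⟨i', j'⟩ <;> simp [spiderDist, depth, hy]

theorem spider_dist (x y : SpiderVert k d) : (spider k d).dist x y = spiderDist x y :=
  SimpleGraph.dist_eq_of_adj_le_of_exists_adj_lt (spiderDist · y) (spiderDist_self y)
    (fun _ _ hab => spiderDist_le_of_adj hab y) (fun _ hay => spiderDist_exists_adj_lt hay) x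

end SpiderDist

section SpiderGeometry

variable {k : ℕ} {d : Fin k → ℕ}

theorem spider_connected : (spider k d).Connected where
  preconnected x y :=
    ⟨(SimpleGraph.exists_walk_length_le_of_exists_adj_lt (spiderDist · y)
      (fun _ hay => spiderDist_exists_adj_lt hay) x).choose⟩

theorem spider_dist_of_onBranch {i : Fin k} {x y : SpiderVert k d} (hx : x.OnBranch i)
    (hy : y.OnBranch i) : (spider k d).dist x y = x.depth - y.depth + (y.depth - x.depth) := by
  rw [spider_dist]
  rcases x with _ | ⟨i₁, j₁⟩ <;> rcases y with _ | ⟨i₂, j₂⟩ <;>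
    simp_all [OnBranch, spiderDist, depth]

theorem spider_dist_of_not_onBranch {i : Fin k} {x y : SpiderVert k d} (hx : x.OnBranch i)
    (hy : ¬ y.OnBranch i) : (spider k d).dist x y = x.depth + y.depth := by
  rw [spider_dist]
  rcases x with _ | ⟨i₁, j₁⟩ <;> rcases y with _ | ⟨i₂, j₂⟩
  · exact absurd trivial hy
  · simp [spiderDist, depth]
  · exact absurd trivial hy
  · simp only [OnBranch] at hx hy
    subst hx
    simp only [spiderDist, depth, Fin.val_ne_iff.mpr (Ne.symm hy), if_false]
    omega

theorem depth_le_of_onBranch {i : Fin k} {x : SpiderVert k d} (hx : x.OnBranch i) :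
    x.depth ≤ d i := by
  rcases x with _ | ⟨i', j⟩
  · exact Nat.zero_le _
  · obtain rfl : i' = i := hx
    exact j.isLt

theorem depth_le_of_not_onBranch {i : Fin k} {D : ℕ} (hD : ∀ j, j ≠ i → d j ≤ D)
    {x : SpiderVert k d} (hx : ¬ x.OnBranch i) : x.depth ≤ D := by
  rcases x with _ | ⟨i', j⟩
  · exact absurd trivial hx
  · exact (depth_le_of_onBranch (x := some ⟨i', j⟩) rfl).trans (hD i' hx)

theorem exists_onBranch (hk : 0 < k) (x : SpiderVert k d) :
    ∃ i, x.OnBranch i ∧ (x.depth = 0 → ∀ j, d j ≤ d i) := by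
  rcases x with _ | ⟨i, j⟩
  · obtain ⟨i, -, hi⟩ := Finset.exists_max_image Finset.univ d ⟨⟨0, hk⟩, Finset.mem_univ _⟩
    exact ⟨i, trivial, fun _ j => hi j (Finset.mem_univ j)⟩
  · exact ⟨i, rfl, fun h => absurd h (Nat.succ_ne_zero _)⟩

theorem onBranch_spiderLeaf (hd : ∀ i, 1 ≤ d i) (i : Fin k) :
    (spiderLeaf k d hd i).OnBranch i := rfl

theorem depth_spiderLeaf (hd : ∀ i, 1 ≤ d i) (i : Fin k) :
    (spiderLeaf k d hd i).depth = d i :=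
  Nat.sub_add_cancel (hd i)

theorem isSpiderLeaf_spiderLeaf (hd : ∀ i, 1 ≤ d i) (i : Fin k) :
    IsSpiderLeaf k d (spiderLeaf k d hd i) :=
  depth_spiderLeaf hd i

theorem depth_lt_of_onBranch_of_ne_spiderLeaf (hd : ∀ i, 1 ≤ d i) {i : Fin k}
    {x : SpiderVert k d} (hx : x.OnBranch i) (hne : x ≠ spiderLeaf k d hd i) : x.depth < d i := by
  refine (depth_le_of_onBranch hx).lt_of_ne fun h => hne ?_
  rcases x with _ | ⟨i', j⟩
  · exact absurd h (Nat.one_le_iff_ne_zero.mp (hd i)).symm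
  · obtain rfl : i' = i := hx
    simp only [depth] at h
    simp only [spiderLeaf, Option.some.injEq, Sigma.mk.injEq, heq_eq_eq, true_and]
    exact Fin.ext (by dsimp only; omega)

theorem spider_dist_add_dist_spiderLeaf (hd : ∀ i, 1 ≤ d i) {i : Fin k} {x z : SpiderVert k d}
    (hz : z.OnBranch i) (hxz : x.OnBranch i → x.depth ≤ z.depth) :
    (spider k d).dist x z + (spider k d).dist z (spiderLeaf k d hd i) =
      (spider k d).dist x (spiderLeaf k d hd i) := by
  have hℓ := onBranch_spiderLeaf hd i
  have := depth_le_of_onBranch hz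
  rw [spider_dist_of_onBranch hz hℓ, depth_spiderLeaf]
  by_cases hx : x.OnBranch i
  · rw [spider_dist_of_onBranch hx hz, spider_dist_of_onBranch hx hℓ, depth_spiderLeaf]
    have := hxz hx
    omega
  · rw [(spider k d).dist_comm, spider_dist_of_not_onBranch hz hx,
      (spider k d).dist_comm, spider_dist_of_not_onBranch hℓ hx, depth_spiderLeaf]
    omega

theorem spider_dist_spiderLeaf_le (hd : ∀ i, 1 ≤ d i) {i : Fin k} {D : ℕ}
    (hD : ∀ j, j ≠ i → d j ≤ D) (x : SpiderVert k d) :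
    (spider k d).dist x (spiderLeaf k d hd i) ≤ d i + D := by
  have hℓ := onBranch_spiderLeaf hd i
  by_cases hx : x.OnBranch i
  · rw [spider_dist_of_onBranch hx hℓ, depth_spiderLeaf]
    have := depth_le_of_onBranch hx
    omega
  · rw [(spider k d).dist_comm, spider_dist_of_not_onBranch hℓ hx, depth_spiderLeaf]
    have := depth_le_of_not_onBranch hD hx
    omega

theorem ecc_spider_le {i m : Fin k} (hdm : 1 ≤ d m) (hm : ∀ j, j ≠ i → d j ≤ d m)
    {z : SpiderVert k d} (hz : z.OnBranch i) (hzd : z.depth < d i)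
    (hlong : z.depth = 0 → ∀ j, d j ≤ d i) : ecc (spider k d) z ≤ d i + d m - 1 := by
  refine Finset.sup_le fun u _ => ?_
  by_cases hu : u.OnBranch i
  · rw [spider_dist_of_onBranch hu hz]
    have := depth_le_of_onBranch hu
    omega
  · rw [(spider k d).dist_comm, spider_dist_of_not_onBranch hz hu]
    have := depth_le_of_not_onBranch hm hu
    rcases Nat.eq_zero_or_pos z.depth with h0 | hpos
    · have := depth_le_of_not_onBranch (fun j _ => hlong h0 j) hu
      omega
    · omega

end SpiderGeometry

theorem Fin.exists_ne_forall_ne_le {k : ℕ} (hk : 2 ≤ k) (d : Fin k → ℕ) (i : Fin k) :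
    ∃ m, m ≠ i ∧ ∀ j, j ≠ i → d j ≤ d m := by
  have hne : (Finset.univ.erase i).Nonempty := by
    rw [← Finset.card_pos, Finset.card_erase_of_mem (Finset.mem_univ i), Finset.card_univ,
      Fintype.card_fin]
    omega
  obtain ⟨m, hm, hmax⟩ := Finset.exists_max_image _ d hne
  exact ⟨m, Finset.ne_of_mem_erase hm, fun j hj => hmax j (by simp [hj])⟩

theorem IsIndepBroadcast.exists_heavier_of_spider {k : ℕ} {d : Fin k → ℕ} (hd : ∀ i, 1 ≤ d i)
    {f : SpiderVert k d → ℕ} (hf : IsIndepBroadcast (spider k d) f) {i m : Fin k} (hmi : m ≠ i)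
    (hm : ∀ j, j ≠ i → d j ≤ d m) {z : SpiderVert k d} (hfz : 0 < f z) (hzi : z.OnBranch i)
    (hzℓ : z ≠ spiderLeaf k d hd i)
    (hdeep : ∀ x, 0 < f x → x.OnBranch i → x ≠ spiderLeaf k d hd i → x.depth ≤ z.depth)
    (hlong : z.depth = 0 → ∀ j, d j ≤ d i) :
    ∃ g, IsIndepBroadcast (spider k d) g ∧ ∑ x, f x < ∑ x, g x := by
  set G := spider k d
  set ℓ := spiderLeaf k d hd i
  set ℓm := spiderLeaf k d hd m
  have hzd := depth_lt_of_onBranch_of_ne_spiderLeaf hd hzi hzℓ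
  have hdist_zℓ : G.dist z ℓ = d i - z.depth := by
    rw [spider_dist_of_onBranch hzi (onBranch_spiderLeaf hd i), depth_spiderLeaf]
    omega
  have hdist_ℓℓm : G.dist ℓm ℓ = d m + d i := by
    rw [spider_dist_of_not_onBranch (onBranch_spiderLeaf hd m) (by exact hmi.symm),
      depth_spiderLeaf, depth_spiderLeaf]
  have hfℓ := hf.lt_dist_of_connected spider_connected hfz hzℓ
  have hfz_le := (hf.1 z).trans (ecc_spider_le (hd m) hm hzi hzd hlong)
  have hbetween : ∀ x, 0 < f x → x ≠ ℓ → G.dist x z + G.dist z ℓ = G.dist x ℓ :=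
    fun x hx hxℓ => spider_dist_add_dist_spiderLeaf hd hzi (hdeep x hx · hxℓ)
  by_cases hmerge : f z + f ℓ < d i + d m
  · have hecc : f z + f ℓ + 1 ≤ ecc G ℓ := (dist_le_ecc ℓm ℓ).trans' (by omega)
    obtain ⟨g, hg, hsum⟩ := hf.exists_transfer hzℓ hfz hecc (by omega)
      fun x hx _ hxℓ => (hbetween x hx hxℓ).le
    exact ⟨g, hg, by omega⟩
  · have honly : ∀ x, x ≠ z ∧ x ≠ ℓ → f x = 0 := by
      refine fun x ⟨hxz, hxℓ⟩ => Nat.eq_zero_of_not_pos fun hx => ?_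
      have := hf.lt_dist hx hfz hxz
      have := hbetween x hx hxℓ
      have : G.dist x ℓ ≤ d i + d m := spider_dist_spiderLeaf_le hd hm x
      -- `d(x, ℓ) = d(x, z) + d(z, ℓ) > f z + f ℓ ≥ d i + d m`
      omega
    obtain ⟨g, hg, hsum⟩ := exists_isIndepBroadcast_pair (G := G) (u := ℓm) (w := ℓ)
      (fun h => hmi (h ▸ onBranch_spiderLeaf hd i : ℓm.OnBranch i)) (n := d i + d m - 1) (by omega)
    refine ⟨g, hg, ?_⟩
    rw [Fintype.sum_eq_add z ℓ hzℓ honly, hsum]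
    have := hd m
    omega

theorem stmt8_general (k : ℕ) (hk : 3 ≤ k) (d : Fin k → ℕ) (hd : ∀ i, 1 ≤ d i)
    (f : SpiderVert k d → ℕ) (hf : IsIndepBroadcast (spider k d) f)
    (hmax : ∑ v, f v = alphaB (spider k d)) :
    ∀ v : SpiderVert k d, 0 < f v → IsSpiderLeaf k d v := by
  classical
  intro v hv
  by_contra hleaf
  obtain ⟨i, hvi, hlong⟩ := exists_onBranch (by omega) v
  obtain ⟨m, hmi, hm⟩ := Fin.exists_ne_forall_ne_le (by omega) d i
  set ℓ := spiderLeaf k d hd i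
  have hvℓ : v ≠ ℓ := fun h => hleaf (h ▸ isSpiderLeaf_spiderLeaf hd i)
  obtain ⟨z, hz, hdeep⟩ := Finset.exists_max_image
    (Finset.univ.filter fun x => 0 < f x ∧ x.OnBranch i ∧ x ≠ ℓ) depth ⟨v, by simp [hv, hvi, hvℓ]⟩
  simp only [Finset.mem_filter, Finset.mem_univ, true_and] at hz hdeep
  have hvz := hdeep v ⟨hv, hvi, hvℓ⟩
  obtain ⟨g, hg, hlt⟩ := hf.exists_heavier_of_spider hd hmi hm hz.1 hz.2.1 hz.2.2
    (fun x hx hxi hxℓ => hdeep x ⟨hx, hxi, hxℓ⟩) (fun h0 => hlong (by omega))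
  have := hg.sum_le_alphaB
  omega

/-- in a maximum-weight independent broadcast on a spider `S(d_1, …, d_k)`,
every broadcasting vertex is a leaf. -/
theorem stmt8 (k : ℕ) (hk : 3 ≤ k) (d : Fin k → ℕ) (hd : ∀ i, 1 ≤ d i) (hmono : Monotone d)
    (f : SpiderVert k d → ℕ) (hf : IsIndepBroadcast (spider k d) f)
    (hmax : ∑ v, f v = alphaB (spider k d)) :
    ∀ v : SpiderVert k d, 0 < f v → IsSpiderLeaf k d v :=
  stmt8_general k hk d hd f hf hmax
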